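/- Let p = (a,b,c,d,t) ∈ ℂ⁵ be a point at which m₁, m₂, m₃ all vanish. If p does not satisfy all of the equations A = 0, B = 0, D = 0, and C·(C + T⁵) = 0 (i.e., if p lies outside the set V(A, B, D, C·(C + T⁵))), then the 3×5 Jacobian matrix (∂mᵢ/∂xⱼ)(p), where (x₁,...,x₅) = (A,B,C,D,T), has rank at least 2 at p. -/

import Mathlib

open MvPolynomial

/-- Variables: `A = X 0`, `B = X 1`, `C = X 2`, `D = X 3`, `T = X 4`. -/
noncomputable def m₁ : MvPolynomial (Fin 5) ℂ :=
  ((X 0) ^ 2 + (X 4) ^ 5) * (X 0) ^ 2 - X 1 * X 2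

noncomputable def m₂ : MvPolynomial (Fin 5) ℂ :=
  ((X 0) ^ 2 + (X 4) ^ 5) * ((X 1) ^ 2 - X 3) - X 2 * X 3

noncomputable def m₃ : MvPolynomial (Fin 5) ℂ :=
  X 1 * ((X 1) ^ 2 - X 3) - (X 0) ^ 2 * X 3

/-- The ideal generated by the three 2×2 minors of
`[[A² + T⁵, B, D], [C, A², B² − D]]`. -/
noncomputable def I_T : Ideal (MvPolynomial (Fin 5) ℂ) :=
  Ideal.span {m₁, m₂, m₃}

/-- The 3×5 Jacobian matrix of `(m₁, m₂, m₃)` evaluated at a point `p ∈ ℂ⁵`. -/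
noncomputable def jacobianAt (p : Fin 5 → ℂ) : Matrix (Fin 3) (Fin 5) ℂ :=
  Matrix.of fun i j => eval p (pderiv j (![m₁, m₂, m₃] i))

/-!
At a common zero of `m₁` and `m₃` outside `V(A, B, D, C·(C + T⁵))` some 2×2 minor of the
Jacobian is nonzero; which one depends on whether `b`, `d`, `a` vanish and whether `d = 3b²`.
-/

theorem Matrix.two_le_rank_of_minor_ne_zero {K m n : Type*} [Field K] [Fintype n]
    (M : Matrix m n K) (i i' : m) (j j' : n)
    (h : M i j * M i' j' - M i j' * M i' j ≠ 0) : 2 ≤ M.rank := by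
  have hdet : (M.submatrix ![i, i'] ![j, j']).det ≠ 0 := by
    rw [Matrix.det_fin_two]
    simpa using h
  calc 2 = (M.submatrix ![i, i'] ![j, j']).rank := by
        rw [Matrix.rank_of_isUnit _ ((Matrix.isUnit_iff_isUnit_det _).mpr hdet.isUnit),
          Fintype.card_fin]
    _ ≤ M.rank := Matrix.rank_submatrix_le _ _ _

def jacobianFormula (a b c d t : ℂ) : Matrix (Fin 3) (Fin 5) ℂ :=
  !![4 * a ^ 3 + 2 * t ^ 5 * a, -c, -b, 0, 5 * t ^ 4 * a ^ 2;
     2 * a * (b ^ 2 - d), 2 * b * (a ^ 2 + t ^ 5), -d, -(a ^ 2 + t ^ 5) - c,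
       5 * t ^ 4 * (b ^ 2 - d);
     -(2 * a * d), 3 * b ^ 2 - d, 0, -b - a ^ 2, 0]

theorem jacobianAt_eq (p : Fin 5 → ℂ) :
    jacobianAt p = jacobianFormula (p 0) (p 1) (p 2) (p 3) (p 4) := by
  ext i j
  fin_cases i <;> fin_cases j <;>
    simp [jacobianAt, jacobianFormula, m₁, m₂, m₃, pderiv_X] <;> ring

theorem two_le_rank_jacobianFormula {a b c d t : ℂ}
    (h₁ : (a ^ 2 + t ^ 5) * a ^ 2 - b * c = 0) (h₃ : b * (b ^ 2 - d) - a ^ 2 * d = 0)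
    (hout : ¬ (a = 0 ∧ b = 0 ∧ d = 0 ∧ c * (c + t ^ 5) = 0)) :
    2 ≤ (jacobianFormula a b c d t).rank := by
  have minor (i i' : Fin 3) (j j' : Fin 5) (x : ℂ) (hx : x ≠ 0) (hM :
      jacobianFormula a b c d t i j * jacobianFormula a b c d t i' j'
        - jacobianFormula a b c d t i j' * jacobianFormula a b c d t i' j = x) :
      2 ≤ (jacobianFormula a b c d t).rank :=
    Matrix.two_le_rank_of_minor_ne_zero _ i i' j j' (hM ▸ hx)
  by_cases hb : b = 0
  · by_cases hd : d = 0
    · by_cases ha : a = 0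
      · refine minor 0 1 1 3 _ (fun hc => hout ⟨ha, hb, hd, hc⟩) ?_
        simp [jacobianFormula, ha, hb, hd]
        ring
      · have ht : t ^ 5 = -a ^ 2 := by
          have : (a ^ 2 + t ^ 5) * a ^ 2 = 0 := by linear_combination h₁ + c * hb
          linear_combination (mul_eq_zero.mp this).resolve_right (pow_ne_zero 2 ha)
        refine minor 0 2 0 3 (-(2 * a ^ 5))
          (neg_ne_zero.mpr (mul_ne_zero two_ne_zero (pow_ne_zero 5 ha))) ?_
        simp [jacobianFormula, hb, hd, ht]
        ring
    · refine minor 1 2 1 2 _ (neg_ne_zero.mpr (pow_ne_zero 2 hd)) ?_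
      simp [jacobianFormula, hb]
      ring
  · by_cases hd : d = 3 * b ^ 2
    · -- on `m₃ = 0`, `d = 3b²` forces `2b = -3a²`, so `b + a² = 0` would give `b = 0`
      have hba : b + a ^ 2 ≠ 0 := by
        intro hba
        have hkey : b ^ 2 * (2 * b + 3 * a ^ 2) = 0 := by
          subst hd
          linear_combination -h₃
        have h2b := (mul_eq_zero.mp hkey).resolve_left (pow_ne_zero 2 hb)
        exact hb (by linear_combination 3 * hba - h2b)
      refine minor 0 2 2 3 _ (mul_ne_zero hb hba) ?_
      simp [jacobianFormula]
      ring
    · refine minor 0 2 1 2 _ (mul_ne_zero hb (sub_ne_zero.mpr (Ne.symm hd))) ?_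
      simp [jacobianFormula]

theorem stmt_10 (p : Fin 5 → ℂ)
    (h₁ : eval p m₁ = 0) (h₃ : eval p m₃ = 0)
    (hout : ¬ (p 0 = 0 ∧ p 1 = 0 ∧ p 3 = 0 ∧ p 2 * (p 2 + (p 4) ^ 5) = 0)) :
    2 ≤ (jacobianAt p).rank := by
  simp only [m₁, m₃, map_sub, map_add, map_mul, map_pow, eval_X] at h₁ h₃
  rw [jacobianAt_eq]
  exact two_le_rank_jacobianFormula h₁ h₃ hout
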